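/- arXiv:1309.4375 — 3 statements merged into one kernel-verified Lean document; each statement's English description precedes it below -/
import Mathlib

section
/- Suppose the complex hyperplane {λ_1 z_1 + ... + λ_n z_n + 1 = 0} is contained in σ_p(A_1,...,A_n), λ_1 = 0, and λ_2 ≠ 0. Then the operator A_1 is not bounded below; that is, for every δ > 0 there exists a unit vector x with ‖A_1 x‖ < δ. -/
/-!
On the complex line `z = t e₁ - λ₂⁻¹ e₂` (`t ∈ ℂ`) of the hyperplane (Lean indices `0`, `1`),
`1 + Σ zᵢ Aᵢ = 1 + t A₁ + C` with `C := -λ₂⁻¹ A₂` independent of `t`. A unit vector `x` in its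
kernel satisfies `t A₁ x = -(x + C x)`, hence `‖A₁ x‖ ≤ (1 + ‖C‖) / |t|`, which is as small as we like
for `|t|` large.
-/

section NotBoundedBelow

variable {𝕜 E : Type*} [RCLike 𝕜] [NormedAddCommGroup E] [NormedSpace 𝕜 E]

lemma norm_smul_apply_le_of_mem_ker {B C : E →L[𝕜] E} {t : 𝕜} {x : E}
    (hx : x ∈ LinearMap.ker ((1 + t • B + C : E →L[𝕜] E) : E →ₗ[𝕜] E)) :
    ‖t‖ * ‖B x‖ ≤ (1 + ‖C‖) * ‖x‖ := by
  have hBx : t • B x = -(x + C x) := by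
    rw [LinearMap.mem_ker] at hx
    simp only [ContinuousLinearMap.coe_coe, add_apply, one_apply_eq_self, smul_apply] at hx
    linear_combination (norm := abel) hx
  calc ‖t‖ * ‖B x‖ = ‖x + C x‖ := by rw [← norm_smul, hBx, norm_neg]
    _ ≤ ‖x‖ + ‖C‖ * ‖x‖ := (norm_add_le _ _).trans (by gcongr; exact C.le_opNorm x)
    _ = (1 + ‖C‖) * ‖x‖ := by ring

lemma exists_norm_eq_one_norm_smul_apply_le {B C : E →L[𝕜] E} {t : 𝕜}
    (h : LinearMap.ker ((1 + t • B + C : E →L[𝕜] E) : E →ₗ[𝕜] E) ≠ ⊥) :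
    ∃ x : E, ‖x‖ = 1 ∧ ‖t‖ * ‖B x‖ ≤ 1 + ‖C‖ := by
  obtain ⟨x, hx, hx0⟩ := (Submodule.ne_bot_iff _).mp h
  have hunit : ‖(‖x‖⁻¹ : 𝕜) • x‖ = 1 := norm_smul_inv_norm hx0
  refine ⟨(‖x‖⁻¹ : 𝕜) • x, hunit, ?_⟩
  simpa [hunit] using norm_smul_apply_le_of_mem_ker (Submodule.smul_mem _ (‖x‖⁻¹ : 𝕜) hx)

theorem exists_norm_eq_one_norm_apply_lt_of_ker_ne_bot {B C : E →L[𝕜] E}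
    (h : ∀ t : 𝕜, LinearMap.ker ((1 + t • B + C : E →L[𝕜] E) : E →ₗ[𝕜] E) ≠ ⊥)
    {δ : ℝ} (hδ : 0 < δ) : ∃ x : E, ‖x‖ = 1 ∧ ‖B x‖ < δ := by
  set r : ℝ := (1 + ‖C‖) / δ + 1
  have hr : 0 < r := by positivity
  obtain ⟨x, hx, hBx⟩ := exists_norm_eq_one_norm_smul_apply_le (h r)
  rw [RCLike.norm_ofReal, abs_of_pos hr] at hBx
  have hδr : 1 + ‖C‖ < r * δ := by
    simp only [r]
    rw [add_mul, div_mul_cancel₀ _ hδ.ne']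
    linarith
  exact ⟨x, hx, lt_of_mul_lt_mul_left (hBx.trans_lt hδr) hr.le⟩

end NotBoundedBelow

lemma sum_single_add_single_smul {ι R M : Type*} [Fintype ι] [DecidableEq ι] [Semiring R]
    [AddCommMonoid M] [Module R M] (i j : ι) (a b : R) (f : ι → M) :
    ∑ k, (Pi.single i a + Pi.single j b : ι → R) k • f k = a • f i + b • f j := by
  simp [add_smul, Finset.sum_add_distrib, Pi.single_apply, ite_smul]

theorem stmt4_general {H : Type*} [NormedAddCommGroup H] [InnerProductSpace ℂ H]
    {n : ℕ} (A : Fin (n + 2) → H →L[ℂ] H) (lam : Fin (n + 2) → ℂ)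
    (hplane : ∀ z : Fin (n + 2) → ℂ, ∑ i, lam i * z i + 1 = 0 →
      LinearMap.ker (((1 : H →L[ℂ] H) + ∑ i, z i • A i : H →L[ℂ] H) : H →ₗ[ℂ] H) ≠ ⊥)
    (h1 : lam 0 = 0) (h2 : lam 1 ≠ 0) :
    ∀ δ > 0, ∃ x : H, ‖x‖ = 1 ∧ ‖A 0 x‖ < δ := by
  intro δ hδ
  refine exists_norm_eq_one_norm_apply_lt_of_ker_ne_bot (C := -(lam 1)⁻¹ • A 1) (fun t => ?_) hδ
  set z : Fin (n + 2) → ℂ := Pi.single 0 t + Pi.single 1 (-(lam 1)⁻¹)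
  have hz : ∑ i, lam i * z i + 1 = 0 := by
    simp only [mul_comm (lam _), ← smul_eq_mul, z, sum_single_add_single_smul]
    simp [h1, h2]
  simpa only [z, sum_single_add_single_smul, add_assoc] using hplane z hz

theorem stmt4 {H : Type*} [NormedAddCommGroup H] [InnerProductSpace ℂ H] [CompleteSpace H]
    {n : ℕ} (A : Fin (n + 2) → H →L[ℂ] H) (lam : Fin (n + 2) → ℂ)
    (hplane : ∀ z : Fin (n + 2) → ℂ, ∑ i, lam i * z i + 1 = 0 →
      LinearMap.ker (((1 : H →L[ℂ] H) + ∑ i, z i • A i : H →L[ℂ] H) : H →ₗ[ℂ] H) ≠ ⊥)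
    (h1 : lam 0 = 0) (h2 : lam 1 ≠ 0) :
    ∀ δ > 0, ∃ x : H, ‖x‖ = 1 ∧ ‖A 0 x‖ < δ :=
  stmt4_general A lam hplane h1 h2
end

section
/- If λ_1 = 0, the complex hyperplane {λ_1 z_1 + ... + λ_n z_n + 1 = 0} (with some λ_k ≠ 0, k ≥ 2) is contained in σ_p(A_1,...,A_n), and A_1 has closed range, then 0 is an eigenvalue of A_1. -/
/-! If `A i₀` were injective, its closed range would make it bounded below, `‖x‖ ≤ K ‖A i₀ x‖`.
The hyperplane contains the point `z = -(lam k)⁻¹ e_k + t e_{i₀}` for every `t`, since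
`lam i₀ = 0`; there `1 + ∑ zᵢ Aᵢ = C + t A i₀` with `C = 1 - (lam k)⁻¹ A k` independent of `t`,
and for `‖t‖ > ‖C‖ K` this operator is injective, contradicting the hypothesis on the hyperplane. -/

theorem Fintype.sum_pi_single_add_pi_single_smul {ι R M : Type*} [Fintype ι] [DecidableEq ι]
    [Semiring R] [AddCommMonoid M] [Module R M] (f : ι → M) (k j : ι) (a b : R) :
    ∑ i, (Pi.single k a + Pi.single j b : ι → R) i • f i = a • f k + b • f j := by
  simp only [Pi.add_apply, add_smul, Finset.sum_add_distrib, Pi.single_apply, ite_smul, zero_smul,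
    Finset.sum_ite_eq', Finset.mem_univ, if_true]

namespace ContinuousLinearMap

variable {𝕜 E F : Type*} [NontriviallyNormedField 𝕜] [NormedAddCommGroup E]
  [SeminormedAddCommGroup F] [NormedSpace 𝕜 E] [NormedSpace 𝕜 F]

theorem injective_add_smul_of_antilipschitz {T : E →L[𝕜] F} {K : NNReal}
    (hT : AntilipschitzWith K T) (C : E →L[𝕜] F) {t : 𝕜} (ht : ‖C‖ * K < ‖t‖) :
    Function.Injective (C + t • T) := by
  refine (injective_iff_map_eq_zero _).mpr fun x hx => ?_
  have hbound : ‖x‖ ≤ K * ‖T x‖ := T.bound_of_antilipschitz hT x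
  have hTx : ‖t‖ * ‖T x‖ ≤ ‖C‖ * K * ‖T x‖ :=
    calc ‖t‖ * ‖T x‖ = ‖C x‖ := by
          have hx' : C x + t • T x = 0 := hx
          rw [← norm_smul, eq_neg_of_add_eq_zero_right hx', norm_neg]
      _ ≤ ‖C‖ * ‖x‖ := C.le_opNorm x
      _ ≤ ‖C‖ * (K * ‖T x‖) := by gcongr
      _ = ‖C‖ * K * ‖T x‖ := by ring
  have hTx0 : ‖T x‖ = 0 := by nlinarith [norm_nonneg (T x)]
  rw [hTx0, mul_zero] at hbound
  exact norm_le_zero_iff.mp hbound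

end ContinuousLinearMap

theorem stmt5 {H : Type*} [NormedAddCommGroup H] [InnerProductSpace ℂ H] [CompleteSpace H]
    {n : ℕ} (A : Fin n → H →L[ℂ] H) (lam : Fin n → ℂ)
    (hplane : ∀ z : Fin n → ℂ, ∑ i, lam i * z i + 1 = 0 →
      LinearMap.ker (((1 : H →L[ℂ] H) + ∑ i, z i • A i : H →L[ℂ] H) : H →ₗ[ℂ] H) ≠ ⊥)
    (i₀ : Fin n) (h1 : lam i₀ = 0) (h2 : ∃ k, k ≠ i₀ ∧ lam k ≠ 0)
    (hrange : IsClosed (LinearMap.range (A i₀ : H →ₗ[ℂ] H) : Set H)) :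
    Module.End.HasEigenvalue ((A i₀ : H →ₗ[ℂ] H)) 0 := by
  rw [Module.End.hasEigenvalue_iff, Module.End.eigenspace_zero]
  intro hker
  obtain ⟨k, -, hk⟩ := h2
  obtain ⟨K, hK⟩ := (A i₀).antilipschitz_of_injective_of_isClosed_range
    (LinearMap.ker_eq_bot.mp hker) hrange
  set C : H →L[ℂ] H := 1 - (lam k)⁻¹ • A k
  set t : ℂ := ((‖C‖ * K + 1 : ℝ) : ℂ)
  set z : Fin n → ℂ := Pi.single k (-(lam k)⁻¹) + Pi.single i₀ t
  have hz : ∑ i, lam i * z i + 1 = 0 := by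
    have hsum := Fintype.sum_pi_single_add_pi_single_smul lam k i₀ (-(lam k)⁻¹) t
    simp only [smul_eq_mul] at hsum
    simp only [mul_comm (lam _), z, hsum, h1, mul_zero, add_zero, neg_mul, inv_mul_cancel₀ hk,
      neg_add_cancel]
  have hop : (1 : H →L[ℂ] H) + ∑ i, z i • A i = C + t • A i₀ := by
    rw [Fintype.sum_pi_single_add_pi_single_smul, neg_smul, ← add_assoc, ← sub_eq_add_neg]
  refine hplane z hz ?_
  rw [hop, LinearMap.ker_eq_bot]
  refine (A i₀).injective_add_smul_of_antilipschitz hK C ?_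
  rw [Complex.norm_real, Real.norm_of_nonneg (by positivity)]
  linarith
end

section
/- Let A and B be N×N complex normal matrices. Then AB = BA if and only if the polynomial det(I + zA + wB) in (z,w) ∈ ℂ² factors as a product of N linear polynomials of the form (1 + λ_k z + μ_k w). -/
/-!
If `A` and `B` commute, a simultaneous unitary (Schur) triangularization `U⋆AU = T`,
`U⋆BU = S` gives `det (1 + zA + wB) = ∏ₖ (1 + z Tₖₖ + w Sₖₖ)`.

Conversely, the factorization says that the eigenvalues of `zA + wB` are `λₖ z + μₖ w`, so
Schur's inequality gives `∑ₖ |λₖ z + μₖ w|² ≤ ‖zA + wB‖²_F`, with equality exactly when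
`zA + wB` is normal. Both sides are Hermitian forms in `(z, w)`, and they agree at `(1, 0)` and
`(0, 1)` because `A` and `B` are normal; a nonnegative Hermitian form with zero diagonal vanishes,
so every `zA + wB` is normal. Normality of `A + B` and `A + iB` gives `A B⋆ = B⋆ A`, and
Fuglede's theorem turns this into `AB = BA`.
-/

open Matrix Polynomial Complex ComplexConjugate

theorem Module.End.exists_hasEigenvector_of_commute {K V : Type*} [Field K] [IsAlgClosed K]
    [AddCommGroup V] [Module K V] [FiniteDimensional K V] [Nontrivial V]
    {f g : Module.End K V} (h : Commute f g) :
    ∃ v α β, f.HasEigenvector α v ∧ g.HasEigenvector β v := by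
  obtain ⟨α, hα⟩ := f.exists_eigenvalue
  have hmaps : ∀ x ∈ f.eigenspace α, g x ∈ f.eigenspace α := fun _ hx =>
    Module.End.mapsTo_genEigenspace_of_comm h α 1 hx
  have : Nontrivial (f.eigenspace α) := Submodule.nontrivial_iff_ne_bot.mpr hα
  obtain ⟨β, hβ⟩ := Module.End.exists_eigenvalue (g.restrict hmaps)
  obtain ⟨⟨v, hvα⟩, hvβ, hv0⟩ := hβ.exists_hasEigenvector
  rw [Module.End.mem_eigenspace_iff, Subtype.ext_iff, LinearMap.coe_restrict_apply] at hvβ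
  exact ⟨v, α, β, ⟨hvα, by simpa using hv0⟩,
    ⟨Module.End.mem_eigenspace_iff.mpr hvβ, by simpa using hv0⟩⟩

theorem Polynomial.roots_prod_univ_X_sub_C {ι R : Type*} [Fintype ι] [CommRing R] [IsDomain R]
    (ν : ι → R) : (∏ i, (X - C (ν i))).roots = Finset.univ.val.map ν := by
  rw [roots_prod _ _ (Finset.prod_ne_zero_iff.mpr fun i _ => X_sub_C_ne_zero (ν i))]
  simp

/-- Taking `w = 1` and `w = I` separates the two cross terms of `star x * x = x * star x`
for `x = a + w • b`. -/
theorem commute_star_of_forall_isStarNormal_add_smul {R : Type*} [Ring R] [StarRing R]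
    [Algebra ℂ R] [StarModule ℂ R] {a b : R} (ha : IsStarNormal a) (hb : IsStarNormal b)
    (h : ∀ w : ℂ, IsStarNormal (a + w • b)) : Commute a (star b) := by
  have key (w : ℂ) :
      w • (star a * b - b * star a) + star w • (star b * a - a * star b) = 0 := by
    have hw := (h w).star_comm_self
    simp only [commute_iff_eq, star_add, star_smul, add_mul, mul_add, smul_mul_assoc,
      mul_smul_comm] at hw
    linear_combination (norm := module)
      hw - ha.star_comm_self.eq - (star w * w) • hb.star_comm_self.eq
  have h1 := key 1
  have hI := key I
  simp only [star_one, one_smul, Complex.star_def, Complex.conj_I] at h1 hI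
  have h2I : (2 * I) • (star b * a - a * star b) = 0 := by
    linear_combination (norm := module) I • h1 - hI
  rw [smul_eq_zero, or_iff_right (by simp), sub_eq_zero] at h2I
  exact h2I.symm

namespace Matrix

section FirstColumn

variable {R : Type*} [Semiring R] {n : ℕ}

theorem mul_succ_zero_eq_zero {M P : Matrix (Fin (n + 1)) (Fin (n + 1)) R}
    (hM : ∀ i : Fin n, M i.succ 0 = 0) (hP : ∀ i : Fin n, P i.succ 0 = 0) (i : Fin n) :
    (M * P) i.succ 0 = 0 := by
  simp [mul_apply, Fin.sum_univ_succ, hM, hP]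

theorem submatrix_succ_mul {M : Matrix (Fin (n + 1)) (Fin (n + 1)) R}
    (hM : ∀ i : Fin n, M i.succ 0 = 0) (P : Matrix (Fin (n + 1)) (Fin (n + 1)) R) :
    (M * P).submatrix Fin.succ Fin.succ =
      M.submatrix Fin.succ Fin.succ * P.submatrix Fin.succ Fin.succ := by
  ext i j
  simp [mul_apply, Fin.sum_univ_succ, hM]

theorem isUpperTriangular_iff_succ {M : Matrix (Fin (n + 1)) (Fin (n + 1)) R} :
    M.IsUpperTriangular ↔
      (∀ i : Fin n, M i.succ 0 = 0) ∧ (M.submatrix Fin.succ Fin.succ).IsUpperTriangular := by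
  refine ⟨fun h => ⟨fun i => h i.succ_pos, fun i j hij => h (Fin.succ_lt_succ_iff.mpr hij)⟩,
    fun ⟨h0, h⟩ i j hij => ?_⟩
  induction i using Fin.cases with
  | zero => exact absurd hij (Fin.not_lt_zero j)
  | succ i =>
    induction j using Fin.cases with
    | zero => exact h0 i
    | succ j => exact h (Fin.succ_lt_succ_iff.mp hij)

/-- The block diagonal matrix `1 ⊕ U`. -/
def oneDirectSum (U : Matrix (Fin n) (Fin n) R) : Matrix (Fin (n + 1)) (Fin (n + 1)) R :=
  of fun i j => Fin.cases (Fin.cases 1 (fun _ => 0) j) (fun i => Fin.cases 0 (U i) j) i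

variable (U W : Matrix (Fin n) (Fin n) R)

@[simp] theorem oneDirectSum_zero_zero : oneDirectSum U 0 0 = 1 := rfl

@[simp] theorem oneDirectSum_zero_succ (j : Fin n) : oneDirectSum U 0 j.succ = 0 := rfl

@[simp] theorem oneDirectSum_succ_zero (i : Fin n) : oneDirectSum U i.succ 0 = 0 := rfl

@[simp] theorem oneDirectSum_succ_succ (i j : Fin n) : oneDirectSum U i.succ j.succ = U i j :=
  rfl

@[simp] theorem submatrix_oneDirectSum : (oneDirectSum U).submatrix Fin.succ Fin.succ = U := rfl

theorem oneDirectSum_mul : oneDirectSum U * oneDirectSum W = oneDirectSum (U * W) := by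
  ext i j
  induction i using Fin.cases <;> induction j using Fin.cases <;>
    simp [mul_apply, Fin.sum_univ_succ]

theorem oneDirectSum_one : oneDirectSum (1 : Matrix (Fin n) (Fin n) R) = 1 := by
  ext i j
  induction i using Fin.cases <;> induction j using Fin.cases <;>
    simp [one_apply, (Fin.succ_ne_zero _).symm]

theorem star_oneDirectSum [StarRing R] : star (oneDirectSum U) = oneDirectSum (star U) := by
  ext i j
  induction i using Fin.cases <;> induction j using Fin.cases <;> simp

theorem oneDirectSum_mem_unitaryGroup {S : Type*} [CommRing S] [StarRing S]
    {U : Matrix (Fin n) (Fin n) S} (hU : U ∈ unitaryGroup (Fin n) S) :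
    oneDirectSum U ∈ unitaryGroup (Fin (n + 1)) S := by
  rw [mem_unitaryGroup_iff', star_oneDirectSum, oneDirectSum_mul,
    Unitary.star_mul_self_of_mem hU, oneDirectSum_one]

theorem isUpperTriangular_star_oneDirectSum_mul [StarRing R]
    {M : Matrix (Fin (n + 1)) (Fin (n + 1)) R} (hM : ∀ i : Fin n, M i.succ 0 = 0)
    {U : Matrix (Fin n) (Fin n) R}
    (hU : (star U * M.submatrix Fin.succ Fin.succ * U).IsUpperTriangular) :
    (star (oneDirectSum U) * M * oneDirectSum U).IsUpperTriangular := by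
  have hUM : ∀ i : Fin n, (star (oneDirectSum U) * M) i.succ 0 = 0 :=
    mul_succ_zero_eq_zero (by simp) hM
  rw [isUpperTriangular_iff_succ, submatrix_succ_mul hUM, submatrix_succ_mul (by simp)]
  exact ⟨mul_succ_zero_eq_zero hUM (by simp), by simpa [star_oneDirectSum] using hU⟩

end FirstColumn

section Schur

theorem exists_unit_common_eigenvector_of_commute {n : Type*} [Fintype n] [DecidableEq n]
    [Nonempty n] {A B : Matrix n n ℂ} (h : Commute A B) :
    ∃ v : EuclideanSpace ℂ n, ‖v‖ = 1 ∧
      ∃ α β : ℂ, A *ᵥ v.ofLp = α • v.ofLp ∧ B *ᵥ v.ofLp = β • v.ofLp := by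
  obtain ⟨u, α, β, hA, hB⟩ :=
    Module.End.exists_hasEigenvector_of_commute (h.map (toLinAlgEquiv' (R := ℂ)))
  have hu : WithLp.toLp 2 u ≠ 0 := by simpa using hA.2
  have hsmul {M : Matrix n n ℂ} {γ : ℂ} (hM : Module.End.HasEigenvector (toLinAlgEquiv' M) γ u)
      (c : ℂ) : M *ᵥ (c • u) = γ • (c • u) := by
    have hMu := Module.End.mem_eigenspace_iff.mp hM.1
    rw [toLinAlgEquiv'_apply] at hMu
    rw [mulVec_smul, hMu, smul_comm]
  exact ⟨(‖WithLp.toLp 2 u‖⁻¹ : ℂ) • WithLp.toLp 2 u, norm_smul_inv_norm hu, α, β,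
    hsmul hA _, hsmul hB _⟩

theorem exists_mem_unitaryGroup_col_zero_eq {n : ℕ} (v : EuclideanSpace ℂ (Fin (n + 1)))
    (hv : ‖v‖ = 1) : ∃ V ∈ unitaryGroup (Fin (n + 1)) ℂ, V.col 0 = v.ofLp := by
  have hon : Orthonormal ℂ (({0} : Set (Fin (n + 1))).domRestrict fun _ => v) :=
    orthonormal_subsingleton_iff.mpr fun _ => hv
  obtain ⟨b, hb⟩ := hon.exists_orthonormalBasis_extension_of_card_eq (by simp)
  refine ⟨_, (EuclideanSpace.basisFun _ ℂ).toMatrix_orthonormalBasis_mem_unitary b, ?_⟩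
  ext i
  simp [Module.Basis.toMatrix_apply, hb 0 rfl]

theorem star_mul_mul_succ_zero_eq_zero {R : Type*} [CommRing R] [StarRing R] {n : ℕ}
    {V A : Matrix (Fin (n + 1)) (Fin (n + 1)) R} (hV : V ∈ unitaryGroup (Fin (n + 1)) R)
    {α : R} (hA : A *ᵥ V.col 0 = α • V.col 0) (i : Fin n) : (star V * A * V) i.succ 0 = 0 := by
  have : (star V * A * V) *ᵥ Pi.single 0 1 = α • Pi.single 0 1 := by
    rw [← mulVec_mulVec, mulVec_single_one, ← mulVec_mulVec, hA, mulVec_smul,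
      ← mulVec_single_one, mulVec_mulVec, Unitary.star_mul_self_of_mem hV, one_mulVec]
  simpa [mulVec_single_one, Fin.succ_ne_zero] using congrFun this i.succ

theorem exists_mem_unitaryGroup_isUpperTriangular_of_commute :
    ∀ {n : ℕ} {A B : Matrix (Fin n) (Fin n) ℂ}, Commute A B →
      ∃ U ∈ unitaryGroup (Fin n) ℂ,
        (star U * A * U).IsUpperTriangular ∧ (star U * B * U).IsUpperTriangular
  | 0, _, _, _ => ⟨1, one_mem _, fun i => i.elim0, fun i => i.elim0⟩
  | n + 1, A, B, h => by
    obtain ⟨v, hv, α, β, hAv, hBv⟩ := exists_unit_common_eigenvector_of_commute h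
    obtain ⟨V, hV, hVv⟩ := exists_mem_unitaryGroup_col_zero_eq v hv
    have hA := star_mul_mul_succ_zero_eq_zero hV (hVv ▸ hAv)
    have hB := star_mul_mul_succ_zero_eq_zero hV (hVv ▸ hBv)
    have hAB : Commute (star V * A * V) (star V * B * V) := by
      simpa using h.map (Unitary.conjStarAlgAut ℂ _ (star ⟨V, hV⟩))
    obtain ⟨U, hU, hAU, hBU⟩ := exists_mem_unitaryGroup_isUpperTriangular_of_commute
      (A := (star V * A * V).submatrix Fin.succ Fin.succ)
      (B := (star V * B * V).submatrix Fin.succ Fin.succ)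
      (by rw [Commute, SemiconjBy, ← submatrix_succ_mul hA, ← submatrix_succ_mul hB, hAB.eq])
    refine ⟨V * oneDirectSum U, mul_mem hV (oneDirectSum_mem_unitaryGroup hU), ?_, ?_⟩
    · simpa only [star_mul, mul_assoc] using isUpperTriangular_star_oneDirectSum_mul hA hAU
    · simpa only [star_mul, mul_assoc] using isUpperTriangular_star_oneDirectSum_mul hB hBU

theorem exists_mem_unitaryGroup_isUpperTriangular {n : ℕ} (M : Matrix (Fin n) (Fin n) ℂ) :
    ∃ U ∈ unitaryGroup (Fin n) ℂ, (star U * M * U).IsUpperTriangular :=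
  let ⟨U, hU, hM, _⟩ := exists_mem_unitaryGroup_isUpperTriangular_of_commute (Commute.refl M)
  ⟨U, hU, hM⟩

end Schur

section UnitaryConj

variable {n R : Type*} [Fintype n] [DecidableEq n] [CommRing R] [StarRing R] {U : Matrix n n R}

theorem det_star_mul_mul (hU : U ∈ unitaryGroup n R) (M : Matrix n n R) :
    det (star U * M * U) = det M := by
  rw [det_mul, det_mul, mul_comm, ← mul_assoc, ← det_mul, Unitary.mul_star_self_of_mem hU,
    det_one, one_mul]

theorem charpoly_star_mul_mul (hU : U ∈ unitaryGroup n R) (M : Matrix n n R) :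
    charpoly (star U * M * U) = charpoly M := by
  rw [charpoly_mul_comm, ← mul_assoc, Unitary.mul_star_self_of_mem hU, one_mul]

theorem isStarNormal_star_mul_mul_iff (hU : U ∈ unitaryGroup n R) {M : Matrix n n R} :
    IsStarNormal (star U * M * U) ↔ IsStarNormal M := by
  let e := Unitary.conjStarAlgAut R (Matrix n n R) (star ⟨U, hU⟩)
  have he : e M = star U * M * U := by simp [e]
  rw [← he, isStarNormal_iff, isStarNormal_iff, commute_iff_eq, commute_iff_eq, ← map_star,
    ← map_mul, ← map_mul, EmbeddingLike.apply_eq_iff_eq]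

end UnitaryConj

theorem IsDiag.isStarNormal {n R : Type*} [Fintype n] [DecidableEq n] [CommSemiring R]
    [StarRing R] {M : Matrix n n R} (h : M.IsDiag) : IsStarNormal M := by
  rw [isStarNormal_iff, ← h.diagonal_diag, star_eq_conjTranspose, diagonal_conjTranspose]
  exact commute_diagonal _ _

theorem IsUpperTriangular.isDiag_of_star {n R : Type*} [LinearOrder n] [AddMonoid R]
    [StarAddMonoid R] {M : Matrix n n R} (h : M.IsUpperTriangular)
    (h' : (star M).IsUpperTriangular) : M.IsDiag := by
  intro i j hij
  rcases hij.lt_or_gt with hlt | hlt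
  · simpa using h' hlt
  · exact h hlt

theorem charpoly_eq_prod_of_forall_det_one_add_smul {n K : Type*} [Fintype n] [DecidableEq n]
    [Field K] [Infinite K] {M : Matrix n n K} {ν : n → K}
    (h : ∀ t : K, det (1 + t • M) = ∏ i, (1 + ν i * t)) :
    M.charpoly = ∏ i, (X - C (ν i)) := by
  refine eq_of_infinite_eval_eq _ _ <| (Set.finite_singleton 0).infinite_compl.mono fun x hx => ?_
  have hx : x ≠ 0 := hx
  have hscalar : scalar n x - M = x • (1 + (-x⁻¹) • M) := by
    rw [smul_add, smul_smul, mul_neg, mul_inv_cancel₀ hx, neg_one_smul, smul_one_eq_diagonal,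
      scalar_apply, sub_eq_add_neg]
  show eval x _ = eval x _
  rw [eval_charpoly, hscalar, det_smul, h, eval_prod, ← Finset.card_univ, Finset.pow_card_mul_prod]
  refine Finset.prod_congr rfl fun i _ => ?_
  simp only [eval_sub, eval_X, eval_C]
  field_simp
  ring

section Frobenius

variable {n : Type*} [Fintype n]

noncomputable def frobeniusNormSq (M : Matrix n n ℂ) : ℝ := (trace (star M * M)).re

theorem frobeniusNormSq_eq_sum (M : Matrix n n ℂ) :
    frobeniusNormSq M = ∑ i, ∑ j, normSq (M i j) := by
  rw [frobeniusNormSq, Finset.sum_comm]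
  simp [trace, mul_apply, Complex.re_sum, ← Complex.normSq_eq_conj_mul_self]

theorem frobeniusNormSq_nonneg (M : Matrix n n ℂ) : 0 ≤ frobeniusNormSq M := by
  rw [frobeniusNormSq_eq_sum]
  exact Finset.sum_nonneg fun i _ => Finset.sum_nonneg fun j _ => normSq_nonneg (M i j)

theorem frobeniusNormSq_eq_zero_iff {M : Matrix n n ℂ} : frobeniusNormSq M = 0 ↔ M = 0 := by
  simp [frobeniusNormSq_eq_sum, Finset.sum_eq_zero_iff_of_nonneg, Finset.sum_nonneg,
    normSq_nonneg, ← Matrix.ext_iff]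

theorem frobeniusNormSq_smul_add_smul (A B : Matrix n n ℂ) (z w : ℂ) :
    frobeniusNormSq (z • A + w • B) =
      normSq z * frobeniusNormSq A + normSq w * frobeniusNormSq B
        + 2 * (conj z * w * trace (star A * B)).re := by
  have hBA : trace (star B * A) = conj (trace (star A * B)) := by
    rw [starRingEnd_apply, ← trace_conjTranspose, conjTranspose_mul, star_eq_conjTranspose,
      star_eq_conjTranspose, conjTranspose_conjTranspose]
  have hexp : trace (star (z • A + w • B) * (z • A + w • B)) =
      normSq z * trace (star A * A) + normSq w * trace (star B * B)
        + (conj z * w * trace (star A * B) + conj (conj z * w * trace (star A * B))) := by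
    simp only [star_add, star_smul, add_mul, mul_add, smul_mul_smul_comm, trace_add, trace_smul,
      smul_eq_mul, hBA, Complex.normSq_eq_conj_mul_self, map_mul, Complex.conj_conj,
      ← starRingEnd_apply]
    ring
  rw [frobeniusNormSq, hexp, Complex.add_re, Complex.add_re, Complex.re_ofReal_mul,
    Complex.re_ofReal_mul, Complex.add_conj]
  simp [frobeniusNormSq]

/-- The difference of the two sides is the Hermitian form `2 Re (conj z * w * c)`, which is
nonnegative for all `z, w` only if `c = 0`. -/
theorem frobeniusNormSq_smul_add_smul_eq_of_le {A B A' B' : Matrix n n ℂ}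
    (hA : frobeniusNormSq A' = frobeniusNormSq A) (hB : frobeniusNormSq B' = frobeniusNormSq B)
    (h : ∀ z w : ℂ, frobeniusNormSq (z • A' + w • B') ≤ frobeniusNormSq (z • A + w • B))
    (z w : ℂ) : frobeniusNormSq (z • A' + w • B') = frobeniusNormSq (z • A + w • B) := by
  set c := trace (star A * B) - trace (star A' * B')
  have hc (z w : ℂ) : 0 ≤ (conj z * w * c).re := by
    have := h z w
    rw [frobeniusNormSq_smul_add_smul, frobeniusNormSq_smul_add_smul, hA, hB] at this
    rw [mul_sub, Complex.sub_re]
    linarith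
  have hc0 : c = 0 := by
    have := hc 1 (-conj c)
    rw [map_one, one_mul, neg_mul, Complex.neg_re, ← Complex.normSq_eq_conj_mul_self,
      Complex.ofReal_re, neg_nonneg] at this
    exact Complex.normSq_eq_zero.mp (le_antisymm this (normSq_nonneg c))
  rw [frobeniusNormSq_smul_add_smul, frobeniusNormSq_smul_add_smul, hA, hB, sub_eq_zero.mp hc0]

variable [DecidableEq n]

theorem frobeniusNormSq_diagonal (d : n → ℂ) :
    frobeniusNormSq (diagonal d) = ∑ i, normSq (d i) := by
  rw [frobeniusNormSq_eq_sum]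
  refine Finset.sum_congr rfl fun i _ => ?_
  rw [Finset.sum_eq_single i (fun j _ hj => by simp [diagonal_apply_ne _ hj.symm]) (by simp)]
  simp

theorem frobeniusNormSq_star_mul_mul {U : Matrix n n ℂ} (hU : U ∈ unitaryGroup n ℂ)
    (M : Matrix n n ℂ) : frobeniusNormSq (star U * M * U) = frobeniusNormSq M := by
  simp only [frobeniusNormSq, star_mul, star_star, mul_assoc]
  rw [← mul_assoc U, Unitary.mul_star_self_of_mem hU, one_mul, trace_mul_comm, mul_assoc,
    mul_assoc M, Unitary.mul_star_self_of_mem hU, mul_one]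

theorem frobeniusNormSq_eq_diagonal_diag_add (M : Matrix n n ℂ) :
    frobeniusNormSq M =
      frobeniusNormSq (diagonal M.diag) + frobeniusNormSq (M - diagonal M.diag) := by
  simp only [frobeniusNormSq_eq_sum, ← Finset.sum_add_distrib]
  refine Finset.sum_congr rfl fun i _ => Finset.sum_congr rfl fun j _ => ?_
  by_cases hij : i = j <;> simp [hij]

theorem frobeniusNormSq_diagonal_diag_le (M : Matrix n n ℂ) :
    frobeniusNormSq (diagonal M.diag) ≤ frobeniusNormSq M := by
  rw [frobeniusNormSq_eq_diagonal_diag_add M]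
  linarith [frobeniusNormSq_nonneg (M - diagonal M.diag)]

theorem frobeniusNormSq_diagonal_diag_eq_iff (M : Matrix n n ℂ) :
    frobeniusNormSq (diagonal M.diag) = frobeniusNormSq M ↔ M.IsDiag := by
  rw [frobeniusNormSq_eq_diagonal_diag_add M, left_eq_add, frobeniusNormSq_eq_zero_iff,
    sub_eq_zero, isDiag_iff_diagonal_diag, eq_comm]

theorem frobeniusNormSq_diagonal_eq_of_charpoly_eq [LinearOrder n] {T : Matrix n n ℂ}
    (hT : T.IsUpperTriangular) {ν : n → ℂ} (h : T.charpoly = ∏ i, (X - C (ν i))) :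
    frobeniusNormSq (diagonal ν) = frobeniusNormSq (diagonal T.diag) := by
  have hroots : Finset.univ.val.map ν = Finset.univ.val.map T.diag := by
    rw [← roots_prod_univ_X_sub_C, ← h, charpoly_of_isUpperTriangular T hT,
      roots_prod_univ_X_sub_C]
    rfl
  have hsum (d : n → ℂ) : ∑ i, normSq (d i) = ((Finset.univ.val.map d).map normSq).sum := by
    rw [Multiset.map_map, Finset.sum_map_val]
    rfl
  rw [frobeniusNormSq_diagonal, frobeniusNormSq_diagonal, hsum, hsum, hroots]

end Frobenius

section SchurInequality

variable {m : ℕ} {M : Matrix (Fin m) (Fin m) ℂ} {ν : Fin m → ℂ}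

theorem frobeniusNormSq_diagonal_le_of_charpoly_eq (h : M.charpoly = ∏ i, (X - C (ν i))) :
    frobeniusNormSq (diagonal ν) ≤ frobeniusNormSq M := by
  obtain ⟨U, hU, hT⟩ := exists_mem_unitaryGroup_isUpperTriangular M
  rw [← frobeniusNormSq_star_mul_mul hU M,
    frobeniusNormSq_diagonal_eq_of_charpoly_eq hT (by rw [charpoly_star_mul_mul hU, h])]
  exact frobeniusNormSq_diagonal_diag_le _

theorem isStarNormal_iff_frobeniusNormSq_eq (h : M.charpoly = ∏ i, (X - C (ν i))) :
    IsStarNormal M ↔ frobeniusNormSq (diagonal ν) = frobeniusNormSq M := by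
  constructor
  · intro hM
    obtain ⟨U, hU, hT, hT'⟩ :=
      exists_mem_unitaryGroup_isUpperTriangular_of_commute hM.star_comm_self.symm
    have hdiag : (star U * M * U).IsDiag :=
      hT.isDiag_of_star (by simpa only [star_mul, star_star, mul_assoc] using hT')
    rw [← frobeniusNormSq_star_mul_mul hU M,
      frobeniusNormSq_diagonal_eq_of_charpoly_eq hT (by rw [charpoly_star_mul_mul hU, h]),
      (frobeniusNormSq_diagonal_diag_eq_iff _).mpr hdiag]
  · intro hF
    obtain ⟨U, hU, hT⟩ := exists_mem_unitaryGroup_isUpperTriangular M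
    rw [← frobeniusNormSq_star_mul_mul hU M,
      frobeniusNormSq_diagonal_eq_of_charpoly_eq hT (by rw [charpoly_star_mul_mul hU, h]),
      frobeniusNormSq_diagonal_diag_eq_iff] at hF
    exact (isStarNormal_star_mul_mul_iff hU).mp hF.isStarNormal

end SchurInequality

open scoped Matrix.Norms.L2Operator in
/-- Fuglede's theorem, in the C⋆-algebra of matrices with the operator norm. -/
theorem commute_of_commute_star {n : Type*} [Fintype n] [DecidableEq n] {A B : Matrix n n ℂ}
    (hB : IsStarNormal B) (h : Commute A (star B)) : Commute A B := by
  simpa using IsStarNormal.commute_star_right (a := star B) inferInstance h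

theorem exists_det_one_add_smul_add_smul_eq_prod_of_commute {m : ℕ}
    {A B : Matrix (Fin m) (Fin m) ℂ} (h : Commute A B) :
    ∃ lam mu : Fin m → ℂ, ∀ z w : ℂ,
      det (1 + z • A + w • B) = ∏ k, (1 + lam k * z + mu k * w) := by
  obtain ⟨U, hU, hA, hB⟩ := exists_mem_unitaryGroup_isUpperTriangular_of_commute h
  refine ⟨(star U * A * U).diag, (star U * B * U).diag, fun z w => ?_⟩
  have hconj : star U * (1 + z • A + w • B) * U =
      1 + z • (star U * A * U) + w • (star U * B * U) := by
    simp [mul_add, add_mul, Unitary.star_mul_self_of_mem hU]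
  have htri : (1 + z • (star U * A * U) + w • (star U * B * U)).IsUpperTriangular :=
    (blockTriangular_one.add fun i j hij => by simp [hA hij]).add fun i j hij => by simp [hB hij]
  rw [← det_star_mul_mul hU, hconj, det_of_isUpperTriangular htri]
  simp [mul_comm]

theorem commute_of_det_one_add_smul_add_smul_eq_prod {m : ℕ} {A B : Matrix (Fin m) (Fin m) ℂ}
    (hA : IsStarNormal A) (hB : IsStarNormal B) {lam mu : Fin m → ℂ}
    (h : ∀ z w : ℂ, det (1 + z • A + w • B) = ∏ k, (1 + lam k * z + mu k * w)) :
    Commute A B := by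
  have hchar (z w : ℂ) : (z • A + w • B).charpoly = ∏ k, (X - C (lam k * z + mu k * w)) :=
    charpoly_eq_prod_of_forall_det_one_add_smul fun t => by
      rw [smul_add, smul_smul, smul_smul, ← add_assoc, h]
      exact Finset.prod_congr rfl fun k _ => by ring
  have hdiag (z w : ℂ) :
      diagonal (fun k => lam k * z + mu k * w) = z • diagonal lam + w • diagonal mu := by
    ext i j
    by_cases hij : i = j <;> simp [hij, mul_comm]
  have hF := frobeniusNormSq_smul_add_smul_eq_of_le
    ((isStarNormal_iff_frobeniusNormSq_eq (by simpa using hchar 1 0)).mp hA)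
    ((isStarNormal_iff_frobeniusNormSq_eq (by simpa using hchar 0 1)).mp hB)
    fun z w => hdiag z w ▸ frobeniusNormSq_diagonal_le_of_charpoly_eq (hchar z w)
  refine commute_of_commute_star hB
    (commute_star_of_forall_isStarNormal_add_smul hA hB fun w => ?_)
  simpa using (isStarNormal_iff_frobeniusNormSq_eq (hchar 1 w)).mpr (hdiag 1 w ▸ hF 1 w)

end Matrix

theorem stmt13 {N : ℕ} (A B : Matrix (Fin N) (Fin N) ℂ)
    (hA : IsStarNormal A) (hB : IsStarNormal B) :
    Commute A B ↔ ∃ lam mu : Fin N → ℂ, ∀ z w : ℂ,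
      Matrix.det ((1 : Matrix (Fin N) (Fin N) ℂ) + z • A + w • B) =
        ∏ k, (1 + lam k * z + mu k * w) :=
  ⟨Matrix.exists_det_one_add_smul_add_smul_eq_prod_of_commute,
    fun ⟨_, _, h⟩ => Matrix.commute_of_det_one_add_smul_add_smul_eq_prod hA hB h⟩
end
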